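/- There exist ε₀ ∈ (0, 1) and C > 0 such that for every ε ∈ (0, ε₀) there exists u₃ ∈ (−1/2, 1/2) with |u₃| ≤ C·ε such that both partial derivatives ∂H̄⁰/∂θ and ∂H̄⁰/∂u vanish at (θ, u) = (π, u₃). (This equilibrium of the averaged co-orbital problem approximates the Lagrange point L₃ within an accuracy O(ε).) -/

import Mathlib

/-!
Since `H̄⁰` depends on `θ` only through `cos θ` and `sin π = 0`, its `θ`-derivative vanishes on the
line `θ = π`. There the distance to the planet is `(1+u)² + 1`, and the `u`-derivative
`(1-ε)/(1+u)³ - 1 + 2ε(1+u)/((1+u)²+1)²` equals `-ε/2` at `u = 0` and is positive at `u = -ε`,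
so it has a zero in `[-ε, 0]` by the intermediate value theorem.
-/

open Real

/-- The reduced averaged Hamiltonian of the 1:1 mean-motion resonance of the
circular-planar restricted three-body problem at zero eccentricity:
`H̄⁰(θ,u) = -(1-ε)/(2(1+u)²) - u + ε(cos θ - ((1+u)⁴ + 1 - 2(1+u)²cos θ)^{-1/2})`. -/
noncomputable def Hbar (ε θ u : ℝ) : ℝ :=
  -(1 - ε) / (2 * (1 + u) ^ 2) - u +
    ε * (cos θ - 1 / Real.sqrt ((1 + u) ^ 4 + 1 - 2 * (1 + u) ^ 2 * cos θ))

open Set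

theorem hasDerivAt_comp_cos_pi {G : ℝ → ℝ} (hG : DifferentiableAt ℝ G (-1)) :
    HasDerivAt (fun θ => G (cos θ)) 0 π := by
  rw [← cos_pi] at hG
  exact (hG.hasDerivAt.comp π (hasDerivAt_cos π)).congr_deriv (by simp)

theorem radicand_at_pi (u : ℝ) :
    (1 + u) ^ 4 + 1 - 2 * (1 + u) ^ 2 * (-1) = ((1 + u) ^ 2 + 1) ^ 2 := by
  ring

theorem hasDerivAt_Hbar_angle_at_pi (ε u : ℝ) : HasDerivAt (fun θ => Hbar ε θ u) 0 π := by
  have hrad : (1 + u) ^ 4 + 1 - 2 * (1 + u) ^ 2 * (-1) ≠ 0 := by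
    rw [radicand_at_pi]; positivity
  have hsqrt : sqrt ((1 + u) ^ 4 + 1 - 2 * (1 + u) ^ 2 * (-1)) ≠ 0 := by
    rw [radicand_at_pi, sqrt_sq (by positivity)]; positivity
  exact hasDerivAt_comp_cos_pi (G := fun c => -(1 - ε) / (2 * (1 + u) ^ 2) - u +
    ε * (c - 1 / sqrt ((1 + u) ^ 4 + 1 - 2 * (1 + u) ^ 2 * c))) (by fun_prop (disch := assumption))

noncomputable def hbarPiDeriv (ε u : ℝ) : ℝ :=
  (1 - ε) / (1 + u) ^ 3 - 1 + 2 * ε * (1 + u) / ((1 + u) ^ 2 + 1) ^ 2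

theorem Hbar_pi (ε u : ℝ) :
    Hbar ε π u = -(1 - ε) / (2 * (1 + u) ^ 2) - u - ε * (1 + 1 / ((1 + u) ^ 2 + 1)) := by
  rw [Hbar, cos_pi, radicand_at_pi, sqrt_sq (by positivity)]
  ring

theorem hasDerivAt_Hbar_pi (ε : ℝ) {u : ℝ} (hu : 1 + u ≠ 0) :
    HasDerivAt (fun u => Hbar ε π u) (hbarPiDeriv ε u) u := by
  simp only [Hbar_pi]
  have hx : HasDerivAt (fun v : ℝ => 1 + v) 1 u := (hasDerivAt_id u).const_add 1
  have hA := (hasDerivAt_const u (-(1 - ε))).fun_div ((hx.fun_pow 2).const_mul 2) (by positivity)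
  have hB := (hasDerivAt_const u (1 : ℝ)).fun_div ((hx.fun_pow 2).add_const 1) (by positivity)
  refine ((hA.sub (hasDerivAt_id' u)).sub ((hB.const_add 1).const_mul ε)).congr_deriv ?_
  rw [hbarPiDeriv]
  field_simp
  ring

theorem continuousOn_hbarPiDeriv (ε : ℝ) : ContinuousOn (hbarPiDeriv ε) (Ioi (-1)) := by
  have h3 : ∀ u ∈ Ioi (-1 : ℝ), (1 + u) ^ 3 ≠ 0 := fun u hu => by
    have : (0 : ℝ) < 1 + u := by rw [mem_Ioi] at hu; linarith
    positivity
  have hq : ∀ u ∈ Ioi (-1 : ℝ), ((1 + u) ^ 2 + 1) ^ 2 ≠ 0 := fun u _ => by positivity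
  unfold hbarPiDeriv
  fun_prop (disch := assumption)

theorem hbarPiDeriv_zero (ε : ℝ) : hbarPiDeriv ε 0 = -ε / 2 := by
  norm_num [hbarPiDeriv]
  ring

theorem hbarPiDeriv_neg_self_pos {ε : ℝ} (h0 : 0 < ε) (h1 : ε < 1) : 0 < hbarPiDeriv ε (-ε) := by
  have h1' : 0 < 1 - ε := by linarith
  have hkepler : (1 - ε) / (1 - ε) ^ 3 - 1 = ε * (2 - ε) / (1 - ε) ^ 2 := by
    field_simp; ring
  rw [hbarPiDeriv, ← sub_eq_add_neg, hkepler]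
  have : 0 < 2 - ε := by linarith
  positivity

theorem exists_hbarPiDeriv_eq_zero {ε : ℝ} (h0 : 0 < ε) (h1 : ε < 1) :
    ∃ u ∈ Icc (-ε) 0, hbarPiDeriv ε u = 0 := by
  refine intermediate_value_Icc' (by linarith) ((continuousOn_hbarPiDeriv ε).mono ?_)
    ⟨by rw [hbarPiDeriv_zero]; linarith, (hbarPiDeriv_neg_self_pos h0 h1).le⟩
  exact fun u hu => show -1 < u by linarith [hu.1]

/-- Approximation of the Lagrange point `L₃` by an equilibrium of the averaged
co-orbital problem: for small `ε` there is an equilibrium `(π, u₃)` of `H̄⁰` with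
`|u₃| ≤ Cε`. -/
theorem L3_equilibrium_of_averaged :
    ∃ ε₀ ∈ Set.Ioo (0 : ℝ) 1, ∃ C > (0 : ℝ), ∀ ε ∈ Set.Ioo (0 : ℝ) ε₀,
      ∃ u₃ ∈ Set.Ioo (-(1 / 2) : ℝ) (1 / 2), |u₃| ≤ C * ε ∧
        HasDerivAt (fun θ => Hbar ε θ u₃) 0 π ∧
        HasDerivAt (fun u => Hbar ε π u) 0 u₃ := by
  refine ⟨1 / 2, ⟨by norm_num, by norm_num⟩, 1, one_pos, ?_⟩
  rintro ε ⟨hε0, hε⟩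
  obtain ⟨u, ⟨hlo, hhi⟩, hu⟩ := exists_hbarPiDeriv_eq_zero hε0 (by linarith)
  refine ⟨u, ⟨by linarith, by linarith⟩, ?_, hasDerivAt_Hbar_angle_at_pi ε u, ?_⟩
  · rw [one_mul, abs_le]
    constructor <;> linarith
  · exact hu ▸ hasDerivAt_Hbar_pi ε (by linarith)
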